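/- For every positive integer m, T(m) ≤ 1 − (m+2)/2^{m+1}; in particular T(m) < 1. -/

import Mathlib

lemma key_choose (m : ℕ) (hm : 1 ≤ m) : ∀ r, 2 ≤ r → r ≤ m + 1 →
    (2 * r).choose r * (m + 1).choose r ≤ (4 * m).choose r := by
  intro r h2
  induction r, h2 using Nat.le_induction with
  | base =>
    intro _
    have h1 : (m + 1).choose 2 * 2 = (m + 1) * m := by
      rw [Nat.choose_two_right]
      simp only [Nat.add_sub_cancel]
      exact Nat.div_mul_cancel (by rw [mul_comm]; exact (Nat.even_mul_succ_self m).two_dvd)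
    have h3 : (4 * m).choose 2 * 2 = 4 * m * (4 * m - 1) := by
      rw [Nat.choose_two_right]
      exact Nat.div_mul_cancel ((by omega : (2:ℕ) ∣ 4 * m).mul_right _)
    have h4 : (2 * 2).choose 2 = 6 := by decide
    refine Nat.le_of_mul_le_mul_right ?_ (show 0 < 2 by norm_num)
    rw [h3, h4, mul_assoc, h1]
    obtain ⟨k, rfl⟩ := Nat.exists_eq_add_of_le hm
    have e : 4 * (1 + k) - 1 = 3 + 4 * k := by omega
    rw [e]
    nlinarith
  | succ r hr ih =>
    intro hr1
    have hrm : r ≤ m := by omega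
    have ih' := ih (by omega)
    have h1 : (2 * (r + 1)).choose (r + 1) * (r + 1) = 2 * (2 * r + 1) * ((2 * r).choose r) := by
      have := Nat.succ_mul_centralBinom_succ r
      simp only [Nat.centralBinom] at this
      rw [mul_comm]
      exact this
    have h2 : (m + 1).choose (r + 1) * (r + 1) = (m + 1).choose r * (m + 1 - r) :=
      Nat.choose_succ_right_eq _ _
    have h3 : (4 * m).choose (r + 1) * (r + 1) = (4 * m).choose r * (4 * m - r) :=
      Nat.choose_succ_right_eq _ _
    have harith : 2 * (2 * r + 1) * (m + 1 - r) ≤ (4 * m - r) * (r + 1) := by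
      obtain ⟨k, rfl⟩ := Nat.exists_eq_add_of_le hrm
      have e1 : r + k + 1 - r = k + 1 := by omega
      have e2 : 4 * (r + k) - r = 3 * r + 4 * k := by omega
      rw [e1, e2]
      nlinarith [hr]
    refine Nat.le_of_mul_le_mul_right ?_ (show 0 < (r + 1) * (r + 1) by positivity)
    calc (2 * (r + 1)).choose (r + 1) * (m + 1).choose (r + 1) * ((r + 1) * (r + 1))
        = ((2 * (r + 1)).choose (r + 1) * (r + 1)) * ((m + 1).choose (r + 1) * (r + 1)) := by
          ring
      _ = (2 * (2 * r + 1) * ((2 * r).choose r)) * ((m + 1).choose r * (m + 1 - r)) := by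
          rw [h1, h2]
      _ = ((2 * r).choose r * (m + 1).choose r) * (2 * (2 * r + 1) * (m + 1 - r)) := by
          ring
      _ ≤ (4 * m).choose r * ((4 * m - r) * (r + 1)) := by
          exact Nat.mul_le_mul ih' harith
      _ = ((4 * m).choose r * (4 * m - r)) * (r + 1) := by ring
      _ = (4 * m).choose (r + 1) * ((r + 1) * (r + 1)) := by rw [← h3]; ring

lemma sum_geom (m : ℕ) :
    ∑ r ∈ Finset.Icc 2 (m + 1), ((r : ℝ) - 1) / 2 ^ r = 1 - ((m : ℝ) + 2) / 2 ^ (m + 1) := by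
  induction m with
  | zero =>
    rw [Finset.Icc_eq_empty (by omega)]
    norm_num
  | succ n ih =>
    rw [show n + 1 + 1 = (n + 1) + 1 from rfl,
      Finset.sum_Icc_succ_top (by omega : 2 ≤ n + 1 + 1), ih]
    push_cast
    have h2 : (2 : ℝ) ^ (n + 1) ≠ 0 := by positivity
    field_simp
    ring

/-- `T m = ∑_{r=2}^{m+1} C(2r, r) C(m+1, r) (r−1)/(2^r C(4m, r))`. -/
noncomputable def T (m : ℕ) : ℝ :=
  ∑ r ∈ Finset.Icc 2 (m + 1),
    (Nat.choose (2 * r) r : ℝ) * (Nat.choose (m + 1) r : ℝ) * ((r : ℝ) - 1) /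
      (2 ^ r * (Nat.choose (4 * m) r : ℝ))

/-- `T(m) ≤ 1 − (m+2)/2^{m+1}`; in particular `T(m) < 1`. -/
theorem T_le (m : ℕ) (hm : 1 ≤ m) :
    T m ≤ 1 - ((m : ℝ) + 2) / 2 ^ (m + 1) ∧ T m < 1 := by
  have hmain : T m ≤ 1 - ((m : ℝ) + 2) / 2 ^ (m + 1) := by
    rw [← sum_geom m]
    unfold T
    apply Finset.sum_le_sum
    intro r hr
    rw [Finset.mem_Icc] at hr
    have hr4m : r ≤ 4 * m := by omega
    have hcpos : (0 : ℝ) < ((4 * m).choose r : ℝ) := by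
      exact_mod_cast Nat.choose_pos hr4m
    have h2pos : (0 : ℝ) < 2 ^ r := by positivity
    have hkey : ((2 * r).choose r : ℝ) * ((m + 1).choose r : ℝ) ≤ ((4 * m).choose r : ℝ) := by
      exact_mod_cast key_choose m hm r hr.1 hr.2
    have hfrac : ((2 * r).choose r : ℝ) * ((m + 1).choose r : ℝ) / ((4 * m).choose r : ℝ) ≤ 1 :=
      (div_le_one hcpos).mpr hkey
    have hd : (0 : ℝ) ≤ ((r : ℝ) - 1) / 2 ^ r := by
      apply div_nonneg _ h2pos.le
      have : (2 : ℝ) ≤ (r : ℝ) := by exact_mod_cast hr.1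
      linarith
    calc ((2 * r).choose r : ℝ) * ((m + 1).choose r : ℝ) * ((r : ℝ) - 1) /
          (2 ^ r * ((4 * m).choose r : ℝ))
        = (((2 * r).choose r : ℝ) * ((m + 1).choose r : ℝ) / ((4 * m).choose r : ℝ)) *
          (((r : ℝ) - 1) / 2 ^ r) := by
          rw [div_mul_div_comm, mul_comm ((2:ℝ) ^ r)]
      _ ≤ ((r : ℝ) - 1) / 2 ^ r := mul_le_of_le_one_left hd hfrac
  refine ⟨hmain, ?_⟩
  have hpos : (0 : ℝ) < ((m : ℝ) + 2) / 2 ^ (m + 1) := by positivity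
  linarith
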